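/- arXiv:1211.6593 — 7 statements merged into one kernel-verified Lean document; each statement's English description precedes it below -/
import Mathlib

section
/- Let S be a commutative semigroup with zero, G = Γ(S), and b a vertex with b² ≠ 0. Let T_b = {x ∈ V(G) : xb = 0, x ≠ b, deg(x) = 1} be the set of end vertices adjacent to b. Then T_b ∪ {0} is a sub-semigroup of S (i.e., closed under multiplication). -/
/-- A zero-divisor: a nonzero element annihilated by some nonzero element. -/
def IsZeroDivisorElem {S : Type*} [Mul S] [Zero S] (x : S) : Prop :=
  x ≠ 0 ∧ ∃ y : S, y ≠ 0 ∧ x * y = 0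

/-- The zero-divisor graph Γ(S) of a commutative semigroup with zero:
vertices are the nonzero zero-divisors, two distinct vertices adjacent iff their product is 0. -/
def zdGraph (S : Type*) [CommSemigroup S] [Zero S] :
    SimpleGraph {x : S // IsZeroDivisorElem x} where
  Adj a b := a ≠ b ∧ (a : S) * (b : S) = 0
  symm := by
    constructor
    rintro a b ⟨h1, h2⟩
    exact ⟨h1.symm, by rwa [mul_comm] at h2⟩
  loopless := by constructor; rintro a ⟨h, _⟩; exact h rfl

/-- An end vertex: a vertex of degree one (exactly one neighbor). -/
def IsEndVertex {V : Type*} (G : SimpleGraph V) (v : V) : Prop :=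
  ∃! u, G.Adj v u

/-- An internal vertex: degree ≥ 2 and no neighbor of degree 1. -/
def IsInternal {V : Type*} (G : SimpleGraph V) (v : V) : Prop :=
  (∃ u, G.Adj v u) ∧ ¬ IsEndVertex G v ∧ ∀ u, G.Adj v u → ¬ IsEndVertex G u

/-- C(a,b): the elements of S that are vertices whose neighborhood is exactly {a, b}. -/
def cSet (S : Type*) [CommSemigroup S] [Zero S]
    (a b : {x : S // IsZeroDivisorElem x}) : Set S :=
  {x : S | ∃ h : IsZeroDivisorElem x, (zdGraph S).neighborSet ⟨x, h⟩ = {a, b}}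

/-- T_a: the elements of S that are end vertices adjacent to the vertex a. -/
def tSet (S : Type*) [CommSemigroup S] [Zero S]
    (a : {x : S // IsZeroDivisorElem x}) : Set S :=
  {x : S | ∃ h : IsZeroDivisorElem x,
    (zdGraph S).Adj ⟨x, h⟩ a ∧ IsEndVertex (zdGraph S) ⟨x, h⟩}

/-! If `x, y ∈ T_b` and `p = x y ≠ 0`, then `p b = 0` and `p ≠ b` because `b² ≠ 0`.
For a neighbour `z` of `p`, the end-vertex property of `y` (or of `x`, applied to `y z`)
leaves only `z = b` or one of `x, y` squaring to zero. An end vertex `u` of `b` with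
`u² = 0` absorbs every nonzero product `u v`, so then `p` equals that vertex, and its
neighbour `z ≠ p` must be `b`. -/

section EndVertices

variable {S : Type*} [CommSemigroup S] [Zero S] {b : {s : S // IsZeroDivisorElem s}} {x y z w : S}

theorem mul_eq_zero_of_mem_tSet (hx : x ∈ tSet S b) : x * b = 0 := by
  obtain ⟨_, hadj, _⟩ := hx
  exact hadj.2

theorem eq_or_eq_of_mem_tSet_of_mul_eq_zero (hx : x ∈ tSet S b) (hw : w ≠ 0) (hxw : x * w = 0) :
    w = x ∨ w = b := by
  obtain ⟨hxz, hadj, hend⟩ := hx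
  refine or_iff_not_imp_left.mpr fun hwx => ?_
  have hwz : IsZeroDivisorElem w := ⟨hw, x, hxz.1, by rw [mul_comm, hxw]⟩
  have hadj' : (zdGraph S).Adj ⟨x, hxz⟩ ⟨w, hwz⟩ :=
    ⟨fun h => hwx (congrArg Subtype.val h).symm, hxw⟩
  exact congrArg Subtype.val (hend.unique hadj' hadj)

theorem ne_of_mul_eq_zero_of_mul_self_ne_zero (hb : (b : S) * (b : S) ≠ 0) (hw : w * b = 0) :
    w ≠ b := by
  rintro rfl
  exact hb hw

variable (hz : ∀ x : S, 0 * x = 0) (hb : (b : S) * (b : S) ≠ 0)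
include hz hb

theorem mul_eq_self_of_mem_tSet_of_mul_self_eq_zero (hx : x ∈ tSet S b) (hxx : x * x = 0)
    (hxy : x * y ≠ 0) : x * y = x := by
  have hxxy : x * (x * y) = 0 := by rw [← mul_assoc, hxx, hz]
  refine (eq_or_eq_of_mem_tSet_of_mul_eq_zero hx hxy hxxy).resolve_right ?_
  refine ne_of_mul_eq_zero_of_mul_self_ne_zero hb ?_
  rw [mul_right_comm, mul_eq_zero_of_mem_tSet hx, hz]

theorem eq_of_mul_mul_eq_zero_of_mem_tSet (hx : x ∈ tSet S b) (hy : y ∈ tSet S b)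
    (hxy : x * y ≠ 0) (hz0 : z ≠ 0) (hzp : z ≠ x * y) (hxyz : x * y * z = 0) : z = b := by
  rcases eq_or_ne (y * z) 0 with hyz | hyz
  · rcases eq_or_eq_of_mem_tSet_of_mul_eq_zero hy hz0 hyz with rfl | rfl
    · have hp : z * x = z :=
        mul_eq_self_of_mem_tSet_of_mul_self_eq_zero hz hb hy hyz (by rwa [mul_comm])
      exact absurd (by rw [mul_comm, hp]) hzp
    · rfl
  · have hyzx : y * z = x := by
      refine (eq_or_eq_of_mem_tSet_of_mul_eq_zero hx hyz (by rwa [← mul_assoc])).resolve_right ?_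
      refine ne_of_mul_eq_zero_of_mul_self_ne_zero hb ?_
      rw [mul_right_comm, mul_eq_zero_of_mem_tSet hy, hz]
    have hxx : x * x = 0 := by rwa [mul_assoc, hyzx] at hxyz
    have hp : x * y = x := mul_eq_self_of_mem_tSet_of_mul_self_eq_zero hz hb hx hxx hxy
    rw [hp] at hxyz hzp
    exact (eq_or_eq_of_mem_tSet_of_mul_eq_zero hx hz0 hxyz).resolve_left hzp

theorem mul_mem_tSet (hx : x ∈ tSet S b) (hy : y ∈ tSet S b) (hxy : x * y ≠ 0) :
    x * y ∈ tSet S b := by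
  have hpb : x * y * b = 0 := by rw [mul_right_comm, mul_eq_zero_of_mem_tSet hx, hz]
  have hpz : IsZeroDivisorElem (x * y) := ⟨hxy, b, b.2.1, hpb⟩
  have hadj : (zdGraph S).Adj ⟨x * y, hpz⟩ b :=
    ⟨fun h => ne_of_mul_eq_zero_of_mul_self_ne_zero hb hpb (congrArg Subtype.val h), hpb⟩
  refine ⟨hpz, hadj, b, hadj, fun z hz' => Subtype.ext ?_⟩
  exact eq_of_mul_mul_eq_zero_of_mem_tSet hz hb hx hy hxy z.2.1
    (fun h => hz'.1 (Subtype.ext h.symm)) hz'.2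

end EndVertices

/-- If b is a vertex with b² ≠ 0, then T_b ∪ {0} is closed under multiplication. -/
theorem stmt3 {S : Type*} [CommSemigroup S] [Zero S] (hz : ∀ x : S, 0 * x = 0)
    (b : {s : S // IsZeroDivisorElem s}) (hb : (b : S) * (b : S) ≠ 0) :
    ∀ x ∈ (tSet S b ∪ {0} : Set S), ∀ y ∈ (tSet S b ∪ {0} : Set S),
      x * y ∈ (tSet S b ∪ {0} : Set S) := by
  rintro x (hx | rfl) y (hy | rfl)
  · by_cases hxy : x * y = 0
    · exact Or.inr hxy
    · exact Or.inl (mul_mem_tSet hz hb hx hy hxy)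
  · exact Or.inr (show x * 0 = 0 by rw [mul_comm, hz])
  · exact Or.inr (hz y)
  · exact Or.inr (hz 0)
end

section
/- Let S be a commutative semigroup with zero, G = Γ(S), and b a vertex of G that is not an end vertex (deg(b) ≥ 2) and such that there exists at least one end vertex adjacent to b. Then {0, b} is an ideal of S, i.e., bS ⊆ {0, b}. -/
/-!
If `a` is an end vertex whose only neighbour is `b`, then every vertex annihilating `a`, other than
`a` itself, is `b`. For `b * t ≠ 0` the element `b * t` annihilates `a`, so it is `b` unless it is
`a`; and `b * t = a` is impossible, since a second neighbour `c` of `b` would then annihilate `a`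
as well, forcing `c = b`.
-/

theorem SimpleGraph.exists_adj_ne_of_not_isEndVertex {V : Type*} {G : SimpleGraph V} {v a : V}
    (hv : ¬ IsEndVertex G v) (hva : G.Adj v a) : ∃ c, G.Adj v c ∧ c ≠ a := by
  by_contra! h
  exact hv ⟨a, hva, h⟩

theorem isZeroDivisorElem_of_mul_eq_zero {S : Type*} [Mul S] [Zero S] {x y : S}
    (hx : x ≠ 0) (hy : y ≠ 0) (hxy : x * y = 0) : IsZeroDivisorElem x :=
  ⟨hx, y, hy, hxy⟩

section EndVertex

variable {S : Type*} [CommSemigroup S] [Zero S] {a b : {s : S // IsZeroDivisorElem s}}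

theorem eq_of_mul_eq_zero_of_isEndVertex (ha : IsEndVertex (zdGraph S) a)
    (hab : (zdGraph S).Adj a b) {v : {s : S // IsZeroDivisorElem s}} (hva : v ≠ a)
    (hv : (v : S) * a = 0) : v = b :=
  ha.unique ⟨hva.symm, by rw [mul_comm, hv]⟩ hab

theorem mul_ne_of_isEndVertex (hz : ∀ x : S, 0 * x = 0) (hb : ¬ IsEndVertex (zdGraph S) b)
    (hba : (zdGraph S).Adj b a) (ha : IsEndVertex (zdGraph S) a) (t : S) :
    (b : S) * t ≠ a := by
  intro hbt
  obtain ⟨c, hbc, hca⟩ := SimpleGraph.exists_adj_ne_of_not_isEndVertex hb hba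
  have hc : (c : S) * a = 0 := by rw [← hbt, ← mul_assoc, mul_comm (c : S), hbc.2, hz]
  exact hbc.ne (eq_of_mul_eq_zero_of_isEndVertex ha hba.symm hca hc).symm

theorem mul_eq_zero_or_eq_of_isEndVertex (hz : ∀ x : S, 0 * x = 0)
    (hb : ¬ IsEndVertex (zdGraph S) b) (hba : (zdGraph S).Adj b a)
    (ha : IsEndVertex (zdGraph S) a) (t : S) : (b : S) * t = 0 ∨ (b : S) * t = b := by
  by_cases h0 : (b : S) * t = 0
  · exact Or.inl h0
  have hbta : (b : S) * t * a = 0 := by rw [mul_right_comm, hba.2, hz]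
  let v : {s : S // IsZeroDivisorElem s} := ⟨_, isZeroDivisorElem_of_mul_eq_zero h0 a.2.1 hbta⟩
  have hva : v ≠ a := fun h => mul_ne_of_isEndVertex hz hb hba ha t (congrArg Subtype.val h)
  exact Or.inr (congrArg Subtype.val (eq_of_mul_eq_zero_of_isEndVertex ha hba.symm hva hbta))

end EndVertex

/-- If b is not an end vertex but has an end-vertex neighbor, then {0, b} is an ideal of S. -/
theorem stmt4 {S : Type*} [CommSemigroup S] [Zero S] (hz : ∀ x : S, 0 * x = 0)
    (b : {s : S // IsZeroDivisorElem s})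
    (hb : ¬ IsEndVertex (zdGraph S) b)
    (hend : ∃ x, (zdGraph S).Adj b x ∧ IsEndVertex (zdGraph S) x) :
    ∀ x ∈ ({0, (b : S)} : Set S), ∀ t : S, x * t ∈ ({0, (b : S)} : Set S) := by
  obtain ⟨a, hba, ha⟩ := hend
  rintro x (rfl | rfl) t
  · exact Or.inl (hz t)
  · exact mul_eq_zero_or_eq_of_isEndVertex hz hb hba ha t
end

section
/- Let S be a commutative semigroup with zero and G = Γ(S). Suppose there exist adjacent vertices a, b, a vertex s with N(s) = {a,b}, and a vertex z with d(s,z) = 3. Then {0, a, b} is an ideal of S. -/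
/-! If `s` is a vertex with `s * s ≠ 0`, then `{0} ∪ N(s)` is an ideal: for `x ∈ N(s)` the product
`x * t` is killed by `s`, so it is `0`, a neighbour of `s`, or `s` itself, and the last case would
give `s * s = 0`. A vertex at distance `3` from `s` rules out `s * s = 0`, because a square-zero
vertex is joined to every vertex `z` by a walk `s - w - z` through `w = y` or `w = s * y`, where
`y` is any nonzero annihilator of `z`. -/

section ZeroDivisorGraph

variable {S : Type*} [CommSemigroup S] [Zero S]

lemma zdGraph_eq_or_adj_of_mul_eq_zero {u v : {x : S // IsZeroDivisorElem x}}
    (h : (u : S) * v = 0) : u = v ∨ (zdGraph S).Adj u v := by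
  by_cases huv : u = v
  · exact Or.inl huv
  · exact Or.inr ⟨huv, h⟩

lemma zdGraph_dist_le_two_of_mul_eq_zero {s w z : {x : S // IsZeroDivisorElem x}}
    (hsw : (s : S) * w = 0) (hwz : (w : S) * z = 0) : (zdGraph S).dist s z ≤ 2 := by
  rcases zdGraph_eq_or_adj_of_mul_eq_zero hsw with rfl | hsw
  · rcases zdGraph_eq_or_adj_of_mul_eq_zero hwz with rfl | hwz
    · simp
    · exact (SimpleGraph.dist_le hwz.toWalk).trans (by simp)
  · rcases zdGraph_eq_or_adj_of_mul_eq_zero hwz with rfl | hwz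
    · exact (SimpleGraph.dist_le hsw.toWalk).trans (by simp)
    · exact SimpleGraph.dist_le (.cons hsw hwz.toWalk)

lemma zdGraph_dist_le_two_of_mul_self_eq_zero (hz : ∀ x : S, 0 * x = 0)
    {s : {x : S // IsZeroDivisorElem x}} (hss : (s : S) * s = 0)
    (z : {x : S // IsZeroDivisorElem x}) : (zdGraph S).dist s z ≤ 2 := by
  obtain ⟨y, hy, hzy⟩ := z.2.2
  have hyz : y * z = 0 := by rw [mul_comm, hzy]
  by_cases hsy : (s : S) * y = 0
  · exact zdGraph_dist_le_two_of_mul_eq_zero (w := ⟨y, hy, z, z.2.1, hyz⟩) hsy hyz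
  · have hssy : (s : S) * (s * y) = 0 := by rw [← mul_assoc, hss, hz]
    have hsyz : (s : S) * y * z = 0 := by rw [mul_assoc, hyz, mul_comm, hz]
    exact zdGraph_dist_le_two_of_mul_eq_zero
      (w := ⟨s * y, hsy, s, s.2.1, by rw [mul_comm, hssy]⟩) hssy hsyz

lemma mul_mem_insert_zero_image_neighborSet (hz : ∀ x : S, 0 * x = 0)
    {s : {x : S // IsZeroDivisorElem x}} (hss : (s : S) * s ≠ 0) {x : S} (hsx : (s : S) * x = 0)
    (t : S) : x * t ∈ insert 0 (Subtype.val '' (zdGraph S).neighborSet s) := by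
  by_cases hxt : x * t = 0
  · exact Or.inl hxt
  have hsxt : (s : S) * (x * t) = 0 := by rw [← mul_assoc, hsx, hz]
  let v : {x : S // IsZeroDivisorElem x} := ⟨x * t, hxt, s, s.2.1, by rw [mul_comm, hsxt]⟩
  rcases zdGraph_eq_or_adj_of_mul_eq_zero (v := v) hsxt with hsv | hsv
  · exact absurd (hsv ▸ hsxt) hss
  · exact Or.inr ⟨v, hsv, rfl⟩

end ZeroDivisorGraph

theorem stmt6_general {S : Type*} [CommSemigroup S] [Zero S] (hz : ∀ x : S, 0 * x = 0)
    (a b s z : {t : S // IsZeroDivisorElem t})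
    (hs : (zdGraph S).neighborSet s = {a, b})
    (hd : (zdGraph S).dist s z = 3) :
    ∀ x ∈ ({0, (a : S), (b : S)} : Set S), ∀ t : S,
      x * t ∈ ({0, (a : S), (b : S)} : Set S) := by
  have hss : (s : S) * s ≠ 0 := fun hss => by
    have := zdGraph_dist_le_two_of_mul_self_eq_zero hz hss z
    omega
  have hideal : insert 0 (Subtype.val '' (zdGraph S).neighborSet s) = {0, (a : S), (b : S)} := by
    rw [hs, Set.image_pair]
  intro x hx t
  rw [← hideal] at hx ⊢
  rcases hx with rfl | ⟨v, hsv, rfl⟩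
  · exact Or.inl (hz t)
  · exact mul_mem_insert_zero_image_neighborSet hz hss hsv.2 t

/-- Under condition (△), {0, a, b} is an ideal of S. -/
theorem stmt6 {S : Type*} [CommSemigroup S] [Zero S] (hz : ∀ x : S, 0 * x = 0)
    (a b s z : {t : S // IsZeroDivisorElem t})
    (hab : (zdGraph S).Adj a b)
    (hs : (zdGraph S).neighborSet s = {a, b})
    (hd : (zdGraph S).dist s z = 3) :
    ∀ x ∈ ({0, (a : S), (b : S)} : Set S), ∀ t : S,
      x * t ∈ ({0, (a : S), (b : S)} : Set S) :=
  stmt6_general hz a b s z hs hd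
end

section
/- Let S be a commutative semigroup with zero and G = Γ(S) satisfying: there exist adjacent vertices a, b, a vertex s with N(s) = {a,b}, and a vertex z with d(s,z) = 3. Suppose a is an internal vertex, b² ≠ 0, and b has exactly one end-vertex neighbor d. If there exists c₁ ∈ C(a,b) with c₁² ∈ (S \ C(a,b)) ∪ {c₁}, then there exists c ∈ C(a,b) such that (S \ C(a,b)) ∪ {c} is a sub-semigroup of S. -/
/-- Auxiliary: the last edge of a walk witnessing a nonzero distance gives a neighbour. -/
lemma exists_adj_end {V : Type*} {G : SimpleGraph V} {s z : V} (h : G.dist s z ≠ 0) :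
    ∃ v, G.Adj v z := by
  obtain ⟨p, hp⟩ := SimpleGraph.exists_walk_of_dist_ne_zero h
  have hl : p.length ≠ 0 := by rw [hp]; exact h
  cases hpr : p.reverse with
  | nil =>
      have h2 := congrArg SimpleGraph.Walk.length hpr
      rw [SimpleGraph.Walk.length_reverse] at h2
      simp [h2] at hl
  | cons had q' => exact ⟨_, had.symm⟩

/-- Auxiliary: elementwise characterisation of membership in `cSet`. -/
lemma cSet_mem_iff {S : Type*} [CommSemigroup S] [Zero S]
    (a b : {t : S // IsZeroDivisorElem t}) (x : S) :
    x ∈ cSet S a b ↔ x ≠ 0 ∧ x ≠ (a : S) ∧ x ≠ (b : S) ∧ x * a = 0 ∧ x * b = 0 ∧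
      ∀ w : S, w ≠ 0 → x * w = 0 → w = (a : S) ∨ w = (b : S) ∨ w = x := by
  constructor
  · rintro ⟨h, hN⟩
    have hxa : (zdGraph S).Adj ⟨x, h⟩ a := by
      rw [← SimpleGraph.mem_neighborSet, hN]; left; rfl
    have hxb : (zdGraph S).Adj ⟨x, h⟩ b := by
      rw [← SimpleGraph.mem_neighborSet, hN]; right; rfl
    refine ⟨h.1, fun hh => hxa.1 (Subtype.ext hh), fun hh => hxb.1 (Subtype.ext hh),
      hxa.2, hxb.2, ?_⟩
    intro w hw hxw
    by_cases hwx : w = x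
    · exact Or.inr (Or.inr hwx)
    · have hwZD : IsZeroDivisorElem w := ⟨hw, x, h.1, by rwa [mul_comm]⟩
      have hadj : (zdGraph S).Adj ⟨x, h⟩ ⟨w, hwZD⟩ :=
        ⟨fun hc => hwx (congrArg Subtype.val hc).symm, hxw⟩
      have : (⟨w, hwZD⟩ : {t : S // IsZeroDivisorElem t}) ∈ ({a, b} :
          Set {t : S // IsZeroDivisorElem t}) := by
        rw [← hN]; exact hadj
      rcases this with h1 | h1
      · exact Or.inl (congrArg Subtype.val h1)
      · exact Or.inr (Or.inl (congrArg Subtype.val h1))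
  · rintro ⟨h0, hna, hnb, hma, hmb, hkill⟩
    have h : IsZeroDivisorElem x := ⟨h0, a, a.2.1, hma⟩
    refine ⟨h, ?_⟩
    ext w
    simp only [SimpleGraph.mem_neighborSet, Set.mem_insert_iff, Set.mem_singleton_iff]
    constructor
    · rintro ⟨hne, hprod⟩
      rcases hkill w.val w.2.1 hprod with h1 | h1 | h1
      · exact Or.inl (Subtype.ext h1)
      · exact Or.inr (Subtype.ext h1)
      · exact absurd (Subtype.ext h1).symm hne
    · rintro (rfl | rfl)
      · exact ⟨fun hc => hna (congrArg Subtype.val hc), hma⟩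
      · exact ⟨fun hc => hnb (congrArg Subtype.val hc), hmb⟩

set_option maxHeartbeats 4000000 in
/-- Under condition (△), if a is internal, b² ≠ 0 and b has exactly one end-vertex
neighbor, then the existence of c₁ ∈ C(a,b) with c₁² ∈ (S \ C(a,b)) ∪ {c₁} yields
some c ∈ C(a,b) with (S \ C(a,b)) ∪ {c} a sub-semigroup of S. -/
theorem stmt12 {S : Type*} [CommSemigroup S] [Zero S] (hz : ∀ x : S, 0 * x = 0)
    (a b s z : {t : S // IsZeroDivisorElem t})
    (hab : (zdGraph S).Adj a b)
    (hs : (zdGraph S).neighborSet s = {a, b})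
    (hd : (zdGraph S).dist s z = 3)
    (ha : IsInternal (zdGraph S) a)
    (hb2 : (b : S) * (b : S) ≠ 0)
    (hTb : ∃ d : S, tSet S b = {d})
    (hc1 : ∃ c₁ ∈ cSet S a b, c₁ * c₁ ∈ (cSet S a b)ᶜ ∪ {c₁}) :
    ∃ c ∈ cSet S a b,
      ∀ x ∈ (cSet S a b)ᶜ ∪ ({c} : Set S), ∀ y ∈ (cSet S a b)ᶜ ∪ ({c} : Set S),
        x * y ∈ (cSet S a b)ᶜ ∪ ({c} : Set S) := by
  classical
  obtain ⟨c₁, hc₁C, hc₁sq⟩ := hc1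
  -- basic element facts
  have mul0 : ∀ x : S, x * 0 = 0 := fun x => by rw [mul_comm]; exact hz x
  have hA0 : (a : S) ≠ 0 := a.2.1
  have hB0 : (b : S) ≠ 0 := b.2.1
  have hAB : (a : S) * (b : S) = 0 := hab.2
  have hBA : (b : S) * (a : S) = 0 := by rw [mul_comm]; exact hab.2
  have hABne : (a : S) ≠ (b : S) := fun h => hab.1 (Subtype.ext h)
  -- C facts
  have hC0 : ∀ c ∈ cSet S a b, c ≠ 0 := fun c hc => ((cSet_mem_iff a b c).1 hc).1
  have hCneA : ∀ c ∈ cSet S a b, c ≠ (a : S) := fun c hc => ((cSet_mem_iff a b c).1 hc).2.1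
  have hCneB : ∀ c ∈ cSet S a b, c ≠ (b : S) := fun c hc => ((cSet_mem_iff a b c).1 hc).2.2.1
  have hCA : ∀ c ∈ cSet S a b, c * (a : S) = 0 := fun c hc =>
    ((cSet_mem_iff a b c).1 hc).2.2.2.1
  have hCB : ∀ c ∈ cSet S a b, c * (b : S) = 0 := fun c hc =>
    ((cSet_mem_iff a b c).1 hc).2.2.2.2.1
  have hCkill : ∀ c ∈ cSet S a b, ∀ w : S, w ≠ 0 → c * w = 0 →
      w = (a : S) ∨ w = (b : S) ∨ w = c := fun c hc =>
    ((cSet_mem_iff a b c).1 hc).2.2.2.2.2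
  have h0C : (0 : S) ∉ cSet S a b := fun h => hC0 0 h rfl
  -- s adjacencies
  have hsa : (zdGraph S).Adj s a := by
    rw [← SimpleGraph.mem_neighborSet, hs]; left; rfl
  have hsb : (zdGraph S).Adj s b := by
    rw [← SimpleGraph.mem_neighborSet, hs]; right; rfl
  -- distance facts
  have hza : ¬ (zdGraph S).Adj z a := by
    intro hza
    have hw := SimpleGraph.dist_le
      (SimpleGraph.Walk.cons hsa (SimpleGraph.Walk.cons hza.symm SimpleGraph.Walk.nil))
    rw [hd] at hw; simp at hw
  have hzb : ¬ (zdGraph S).Adj z b := by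
    intro hzb
    have hw := SimpleGraph.dist_le
      (SimpleGraph.Walk.cons hsb (SimpleGraph.Walk.cons hzb.symm SimpleGraph.Walk.nil))
    rw [hd] at hw; simp at hw
  have hzsne : z ≠ s := by
    intro h; rw [h] at hd; simp [SimpleGraph.dist_self] at hd
  have hzane : z ≠ a := by
    intro h
    have h1 : (zdGraph S).dist s a = 1 := SimpleGraph.dist_eq_one_iff_adj.2 hsa
    rw [h, h1] at hd; exact absurd hd (by norm_num)
  have hzbne : z ≠ b := by
    intro h
    have h1 : (zdGraph S).dist s b = 1 := SimpleGraph.dist_eq_one_iff_adj.2 hsb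
    rw [h, h1] at hd; exact absurd hd (by norm_num)
  obtain ⟨v, hvz⟩ : ∃ v, (zdGraph S).Adj v z :=
    exists_adj_end (by rw [hd]; norm_num)
  -- element-level z, v facts
  have hZ0 : (z : S) ≠ 0 := z.2.1
  have hZA : (z : S) * (a : S) ≠ 0 := by
    intro h
    exact hza ⟨fun hc => hzane hc, h⟩
  have hZB : (z : S) * (b : S) ≠ 0 := by
    intro h
    exact hzb ⟨fun hc => hzbne hc, h⟩
  have hZneA : (z : S) ≠ (a : S) := fun h => hzane (Subtype.ext h)
  have hZneB : (z : S) ≠ (b : S) := fun h => hzbne (Subtype.ext h)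
  have hZnotC : (z : S) ∉ cSet S a b := by
    rintro ⟨h, hN⟩
    have : (⟨(z : S), h⟩ : {t : S // IsZeroDivisorElem t}) = z := Subtype.ext rfl
    rw [this] at hN
    have : (zdGraph S).Adj z a := by rw [← SimpleGraph.mem_neighborSet, hN]; left; rfl
    exact hza this
  have hVZ : (v : S) * (z : S) = 0 := hvz.2
  have hV0 : (v : S) ≠ 0 := v.2.1
  have hVneA : (v : S) ≠ (a : S) := by
    intro h
    have : v = a := Subtype.ext h
    rw [this] at hvz
    exact hza hvz.symm
  have hVneB : (v : S) ≠ (b : S) := by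
    intro h
    have : v = b := Subtype.ext h
    rw [this] at hvz
    exact hzb hvz.symm
  have hVnotC : (v : S) ∉ cSet S a b := by
    rintro ⟨h, hN⟩
    have hve : (⟨(v : S), h⟩ : {t : S // IsZeroDivisorElem t}) = v := Subtype.ext rfl
    rw [hve] at hN
    have hz2 : z ∈ (zdGraph S).neighborSet v := by
      rw [SimpleGraph.mem_neighborSet]; exact hvz
    rw [hN] at hz2
    rcases hz2 with h2 | h2
    · exact hzane h2
    · exact hzbne h2
  have hVneZ : (v : S) ≠ (z : S) := fun h => hvz.1 (Subtype.ext h)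
  -- z and v kill no element of C
  have hZC : ∀ c ∈ cSet S a b, c * (z : S) ≠ 0 := by
    intro c hc h
    rcases hCkill c hc _ hZ0 h with h1 | h1 | h1
    · exact hZneA h1
    · exact hZneB h1
    · rw [← h1] at hc; exact hZnotC hc
  have hVC : ∀ c ∈ cSet S a b, c * (v : S) ≠ 0 := by
    intro c hc h
    rcases hCkill c hc _ hV0 h with h1 | h1 | h1
    · exact hVneA h1
    · exact hVneB h1
    · rw [← h1] at hc; exact hVnotC hc
  -- internality, elementwise
  have hInt : ∀ x : S, x ≠ 0 → x ≠ (a : S) → x * (a : S) = 0 →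
      ∃ w : S, w ≠ 0 ∧ w ≠ (a : S) ∧ w ≠ x ∧ x * w = 0 := by
    intro x hx0 hxa hxA
    have hxZD : IsZeroDivisorElem x := ⟨hx0, a, hA0, hxA⟩
    have hadj0 : (zdGraph S).Adj ⟨x, hxZD⟩ a :=
      ⟨fun hc => hxa (congrArg Subtype.val hc), hxA⟩
    have hadj : (zdGraph S).Adj a ⟨x, hxZD⟩ := hadj0.symm
    have hnend := ha.2.2 _ hadj
    have hex : ∃ u, (zdGraph S).Adj ⟨x, hxZD⟩ u ∧ u ≠ a := by
      by_contra hcon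
      push_neg at hcon
      exact hnend ⟨a, hadj0, hcon⟩
    obtain ⟨u, hu, hune⟩ := hex
    exact ⟨u.val, u.2.1, fun h => hune (Subtype.ext h), fun h => hu.1 (Subtype.ext h).symm,
      hu.2⟩
    -- T_b extraction
  obtain ⟨Delt, hTbD⟩ := hTb
  have hDmem : Delt ∈ tSet S b := by rw [hTbD]; rfl
  obtain ⟨hDzd, hDadj, hDend⟩ := hDmem
  have hD0 : Delt ≠ 0 := hDzd.1
  have hDB : Delt * (b : S) = 0 := hDadj.2
  have hDneB : Delt ≠ (b : S) := fun h => hDadj.1 (Subtype.ext h)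
  have hDkill : ∀ w : S, w ≠ 0 → Delt * w = 0 → w = (b : S) ∨ w = Delt := by
    intro w hw hmul
    by_cases hwD : w = Delt
    · exact Or.inr hwD
    · left
      have hwzd : IsZeroDivisorElem w := ⟨hw, Delt, hD0, by rwa [mul_comm]⟩
      have hadj : (zdGraph S).Adj ⟨Delt, hDzd⟩ ⟨w, hwzd⟩ :=
        ⟨fun hc => hwD (congrArg Subtype.val hc).symm, hmul⟩
      obtain ⟨u, hu, huniq⟩ := hDend
      have h1 := huniq _ hadj
      have h2 := huniq _ hDadj
      exact congrArg Subtype.val (h1.trans h2.symm)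
  have hDuniq : ∀ x : S, x ≠ 0 → x * (b : S) = 0 → x ≠ (b : S) →
      (∀ w : S, w ≠ 0 → x * w = 0 → w = (b : S) ∨ w = x) → x = Delt := by
    intro x hx0 hxB hxneB hkill
    have hxzd : IsZeroDivisorElem x := ⟨hx0, b, hB0, hxB⟩
    have hxadjb : (zdGraph S).Adj ⟨x, hxzd⟩ b :=
      ⟨fun hc => hxneB (congrArg Subtype.val hc), hxB⟩
    have hmem : x ∈ tSet S b := by
      refine ⟨hxzd, hxadjb, ⟨b, hxadjb, ?_⟩⟩
      intro u hu
      rcases hkill u.val u.2.1 hu.2 with h1 | h1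
      · exact Subtype.ext h1
      · exact absurd (Subtype.ext h1).symm hu.1
    rw [hTbD] at hmem; exact hmem
  have hDneA : Delt ≠ (a : S) := by
    intro h
    have h4 : Delt * c₁ = 0 := by rw [h, mul_comm]; exact hCA c₁ hc₁C
    rcases hDkill c₁ (hC0 _ hc₁C) h4 with h5 | h5
    · exact hCneB _ hc₁C h5
    · exact hCneA _ hc₁C (h5.trans h)
  -- Lemma P (a-version): no element of C is a multiple of a
  have hPA : ∀ c' ∈ cSet S a b, ∀ y : S, c' ≠ (a : S) * y := by
    intro c' hc' y hEq
    have hc'sq : c' * c' = 0 := by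
      have h1 : ((a : S) * y) * ((a : S) * y) = (((a : S) * y) * (a : S)) * y := by ac_rfl
      rw [hEq, h1, ← hEq, hCA c' hc', hz]
    have hg0 : c' * (z : S) ≠ 0 := hZC c' hc'
    have hgkill : c' * (c' * (z : S)) = 0 := by
      have h1 : c' * (c' * (z : S)) = (z : S) * (c' * c') := by ac_rfl
      rw [h1, hc'sq, mul0]
    rcases hCkill c' hc' _ hg0 hgkill with h1 | h1 | h1
    · -- c'*z = a
      have hva : (v : S) * (a : S) = 0 := by
        rw [← h1]
        have h2 : (v : S) * (c' * (z : S)) = ((v : S) * (z : S)) * c' := by ac_rfl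
        rw [h2, hVZ, hz]
      have h3 : c' * (v : S) = 0 := by
        rw [hEq]
        have h2 : ((a : S) * y) * (v : S) = ((v : S) * (a : S)) * y := by ac_rfl
        rw [h2, hva, hz]
      exact hVC c' hc' h3
    · -- c'*z = b
      have h3 : (b : S) * (c' * (z : S)) = 0 := by
        have h2 : (b : S) * (c' * (z : S)) = (c' * (b : S)) * (z : S) := by ac_rfl
        rw [h2, hCB c' hc', hz]
      rw [h1] at h3
      exact hb2 h3
    · -- c'*z = c'
      have h3 : (v : S) * (c' * (z : S)) = 0 := by
        have h2 : (v : S) * (c' * (z : S)) = ((v : S) * (z : S)) * c' := by ac_rfl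
        rw [h2, hVZ, hz]
      rw [h1, mul_comm] at h3
      exact hVC c' hc' h3
  -- Lemma P (b-version)
  have hPB : ∀ c' ∈ cSet S a b, ∀ y : S, c' ≠ (b : S) * y := by
    intro c' hc' y hEq
    have hc'sq : c' * c' = 0 := by
      have h1 : ((b : S) * y) * ((b : S) * y) = (((b : S) * y) * (b : S)) * y := by ac_rfl
      rw [hEq, h1, ← hEq, hCB c' hc', hz]
    have hg0 : c' * (z : S) ≠ 0 := hZC c' hc'
    have hgkill : c' * (c' * (z : S)) = 0 := by
      have h1 : c' * (c' * (z : S)) = (z : S) * (c' * c') := by ac_rfl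
      rw [h1, hc'sq, mul0]
    rcases hCkill c' hc' _ hg0 hgkill with h1 | h1 | h1
    · -- c'*z = a : analyse t = b*z
      have ht0 : c' * ((b : S) * (z : S)) = 0 := by
        have h2 : c' * ((b : S) * (z : S)) = (c' * (b : S)) * (z : S) := by ac_rfl
        rw [h2, hCB c' hc', hz]
      have hbz0 : (b : S) * (z : S) ≠ 0 := by
        rw [mul_comm]; exact hZB
      rcases hCkill c' hc' _ hbz0 ht0 with h2 | h2 | h2
      · -- b*z = a
        have h3 : ((b : S) * (b : S)) * (z : S) = 0 := by
          have h4 : ((b : S) * (b : S)) * (z : S) = (((b : S) * (z : S)) * (b : S)) := by ac_rfl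
          rw [h4, h2, hAB]
        have hbb0 : (b : S) * (b : S) ≠ 0 := hb2
        have hbbk : c' * ((b : S) * (b : S)) = 0 := by
          have h4 : c' * ((b : S) * (b : S)) = (c' * (b : S)) * (b : S) := by ac_rfl
          rw [h4, hCB c' hc', hz]
        rcases hCkill c' hc' _ hbb0 hbbk with h5 | h5 | h5
        · rw [h5] at h3
          exact hZA (by rwa [mul_comm] at h3)
        · rw [h5] at h3
          rw [h3] at h2
          exact hA0 h2.symm
        · rw [h5, h1] at h3
          exact hA0 h3
      · -- b*z = b
        have h3 : c' * (z : S) = c' := by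
          rw [hEq]
          have h4 : ((b : S) * y) * (z : S) = ((b : S) * (z : S)) * y := by ac_rfl
          rw [h4, h2]
        rw [h1] at h3
        exact hCneA c' hc' h3.symm
      · -- b*z = c'
        have h3 : (v : S) * ((b : S) * (z : S)) = 0 := by
          have h4 : (v : S) * ((b : S) * (z : S)) = ((v : S) * (z : S)) * (b : S) := by ac_rfl
          rw [h4, hVZ, hz]
        rw [h2, mul_comm] at h3
        exact hVC c' hc' h3
    · -- c'*z = b
      have h3 : (b : S) * (c' * (z : S)) = 0 := by
        have h2 : (b : S) * (c' * (z : S)) = (c' * (b : S)) * (z : S) := by ac_rfl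
        rw [h2, hCB c' hc', hz]
      rw [h1] at h3
      exact hb2 h3
    · -- c'*z = c'
      have h3 : (v : S) * (c' * (z : S)) = 0 := by
        have h2 : (v : S) * (c' * (z : S)) = ((v : S) * (z : S)) * c' := by ac_rfl
        rw [h2, hVZ, hz]
      rw [h1, mul_comm] at h3
      exact hVC c' hc' h3
  -- b is idempotent
  have hBB : (b : S) * (b : S) = (b : S) := by
    have h1 : c₁ * ((b : S) * (b : S)) = 0 := by
      have h2 : c₁ * ((b : S) * (b : S)) = (c₁ * (b : S)) * (b : S) := by ac_rfl
      rw [h2, hCB c₁ hc₁C, hz]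
    rcases hCkill c₁ hc₁C _ hb2 h1 with h2 | h2 | h2
    · -- b*b = a
      exfalso
      have hDA0 : Delt * (a : S) = 0 := by
        rw [← h2]
        have h3 : Delt * ((b : S) * (b : S)) = (Delt * (b : S)) * (b : S) := by ac_rfl
        rw [h3, hDB, hz]
      rcases hDkill _ hA0 hDA0 with h3 | h3
      · exact hABne h3
      · exact hDneA h3.symm
    · exact h2
    · exact absurd h2.symm (hPB c₁ hc₁C (b : S))
  -- D * a = a
  have hDA : Delt * (a : S) = (a : S) := by
    have h0 : Delt * (a : S) ≠ 0 := by
      intro h0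
      rcases hDkill _ hA0 h0 with h3 | h3
      · exact hABne h3
      · exact hDneA h3.symm
    have h1 : c₁ * (Delt * (a : S)) = 0 := by
      have h2 : c₁ * (Delt * (a : S)) = (c₁ * (a : S)) * Delt := by ac_rfl
      rw [h2, hCA c₁ hc₁C, hz]
    rcases hCkill c₁ hc₁C _ h0 h1 with h2 | h2 | h2
    · exact h2
    · exfalso
      have h3 : (b : S) * (Delt * (a : S)) = 0 := by
        have h4 : (b : S) * (Delt * (a : S)) = ((a : S) * (b : S)) * Delt := by ac_rfl
        rw [h4, hAB, hz]
      rw [h2] at h3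
      exact hb2 h3
    · exact absurd (by rw [← h2, mul_comm]) (hPA c₁ hc₁C Delt)
  -- D is idempotent
  have hDD : Delt * Delt = Delt := by
    have hD2A : (Delt * Delt) * (a : S) = (a : S) := by
      have h1 : (Delt * Delt) * (a : S) = Delt * (Delt * (a : S)) := by ac_rfl
      rw [h1, hDA, hDA]
    have hD2ne0 : Delt * Delt ≠ 0 := by
      intro h; rw [h, hz] at hD2A; exact hA0 hD2A.symm
    have hD2B : (Delt * Delt) * (b : S) = 0 := by
      have h1 : (Delt * Delt) * (b : S) = (Delt * (b : S)) * Delt := by ac_rfl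
      rw [h1, hDB, hz]
    apply hDuniq _ hD2ne0 hD2B
    · intro h; rw [h] at hD2B; exact hb2 hD2B
    · intro w hw hmul
      by_cases hDw : Delt * w = 0
      · rcases hDkill w hw hDw with h1 | h1
        · exact Or.inl h1
        · exfalso
          rw [h1] at hmul
          have h4 : ((Delt * Delt) * Delt) * (a : S) = (a : S) := by
            have h5 : ((Delt * Delt) * Delt) * (a : S) = Delt * (Delt * (Delt * (a : S))) := by
              ac_rfl
            rw [h5, hDA, hDA, hDA]
          rw [hmul, hz] at h4
          exact hA0 h4.symm
      · have hDDw : Delt * (Delt * w) = 0 := by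
          have h1 : Delt * (Delt * w) = (Delt * Delt) * w := by ac_rfl
          rw [h1, hmul]
        rcases hDkill _ hDw hDDw with h1 | h1
        · exfalso
          have h3 : (Delt * w) * (b : S) = 0 := by
            have h4 : (Delt * w) * (b : S) = (Delt * (b : S)) * w := by ac_rfl
            rw [h4, hDB, hz]
          rw [h1] at h3
          exact hb2 h3
        · exfalso
          have h3 : (Delt * Delt) * w = Delt * Delt := by
            have h4 : (Delt * Delt) * w = (Delt * w) * Delt := by ac_rfl
            rw [h4, h1]
          rw [hmul] at h3
          exact hD2ne0 h3.symm
  -- a * z = a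
  have hAZ : (a : S) * (z : S) = (a : S) := by
    have hAZ0 : (a : S) * (z : S) ≠ 0 := by
      rw [mul_comm]; exact hZA
    have h1 : c₁ * ((a : S) * (z : S)) = 0 := by
      have h2 : c₁ * ((a : S) * (z : S)) = (c₁ * (a : S)) * (z : S) := by ac_rfl
      rw [h2, hCA c₁ hc₁C, hz]
    rcases hCkill c₁ hc₁C _ hAZ0 h1 with h2 | h2 | h2
    · exact h2
    · exfalso
      have h3 : ((a : S) * (z : S)) * Delt = (a : S) * (z : S) := by
        have h4 : ((a : S) * (z : S)) * Delt = (Delt * (a : S)) * (z : S) := by ac_rfl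
        rw [h4, hDA]
      rw [h2] at h3
      have h4 : (b : S) * Delt = 0 := by rw [mul_comm]; exact hDB
      rw [h4] at h3
      exact hB0 h3.symm
    · exact absurd h2.symm (hPA c₁ hc₁C (z : S))
  -- b * z = b
  have hBZ : (b : S) * (z : S) = (b : S) := by
    have hBZ0 : (b : S) * (z : S) ≠ 0 := by
      rw [mul_comm]; exact hZB
    have h1 : c₁ * ((b : S) * (z : S)) = 0 := by
      have h2 : c₁ * ((b : S) * (z : S)) = (c₁ * (b : S)) * (z : S) := by ac_rfl
      rw [h2, hCB c₁ hc₁C, hz]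
    rcases hCkill c₁ hc₁C _ hBZ0 h1 with h2 | h2 | h2
    · exfalso
      have h3 : ((b : S) * (z : S)) * (b : S) = (b : S) * (z : S) := by
        have h4 : ((b : S) * (z : S)) * (b : S) = ((b : S) * (b : S)) * (z : S) := by ac_rfl
        rw [h4, hBB]
      rw [h2, hAB] at h3
      exact hA0 h3.symm
    · exact h2
    · exact absurd h2.symm (hPB c₁ hc₁C (z : S))
  -- v kills a and b
  have hVA : (v : S) * (a : S) = 0 := by
    have h1 : (v : S) * ((a : S) * (z : S)) = ((v : S) * (z : S)) * (a : S) := by ac_rfl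
    rw [hVZ, hz, hAZ] at h1
    exact h1
  have hVB : (v : S) * (b : S) = 0 := by
    have h1 : (v : S) * ((b : S) * (z : S)) = ((v : S) * (z : S)) * (b : S) := by ac_rfl
    rw [hVZ, hz, hBZ] at h1
    exact h1
  -- any non-zero-divisor fixes D
  have hxD : ∀ x : S, (∀ w : S, w ≠ 0 → x * w ≠ 0) → x * Delt = Delt := by
    intro x hx
    have hxD0 : x * Delt ≠ 0 := hx Delt hD0
    have hxDb : (x * Delt) * (b : S) = 0 := by
      have h1 : (x * Delt) * (b : S) = x * (Delt * (b : S)) := by ac_rfl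
      rw [h1, hDB, mul0]
    apply hDuniq _ hxD0 hxDb
    · intro h; rw [h] at hxDb; exact hb2 hxDb
    · intro w hw hmul
      have hDw : Delt * w = 0 := by
        by_contra hne
        refine hx (Delt * w) hne ?_
        have h1 : x * (Delt * w) = (x * Delt) * w := by ac_rfl
        rw [h1, hmul]
      rcases hDkill w hw hDw with h1 | h1
      · exact Or.inl h1
      · exfalso
        have h3 : (x * Delt) * w = x * Delt := by
          have h4 : (x * Delt) * w = x * (Delt * w) := by ac_rfl
          rw [h4, h1, hDD]
        rw [hmul] at h3
        exact hxD0 h3.symm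
    -- classification of products c*x landing in C
  have hclass : ∀ c ∈ cSet S a b, ∀ x : S, x ∉ cSet S a b → c * x ∈ cSet S a b →
      c * x ≠ c → c * x ≠ x → (x = Delt ∨ ∀ w : S, w ≠ 0 → x * w ≠ 0) := by
    intro c hc x hxC heC hec hex
    have hx0 : x ≠ 0 := by
      intro h; rw [h, mul0] at heC; exact h0C heC
    have hxA : x ≠ (a : S) := by
      intro h; rw [h, hCA c hc] at heC; exact h0C heC
    have hxB : x ≠ (b : S) := by
      intro h; rw [h, hCB c hc] at heC; exact h0C heC
    have hxa2 : x * (a : S) = 0 ∨ x * (a : S) = (a : S) := by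
      by_cases h0 : x * (a : S) = 0
      · exact Or.inl h0
      right
      have hk : (c * x) * (x * (a : S)) = 0 := by
        have h1 : (c * x) * (x * (a : S)) = ((c * (a : S)) * x) * x := by ac_rfl
        rw [h1, hCA c hc, hz, hz]
      rcases hCkill _ heC _ h0 hk with h1 | h1 | h1
      · exact h1
      · exfalso
        have h2 : (x * (a : S)) * (b : S) = 0 := by
          have h3 : (x * (a : S)) * (b : S) = ((a : S) * (b : S)) * x := by ac_rfl
          rw [h3, hAB, hz]
        rw [h1] at h2; exact hb2 h2
      · exact absurd (h1.symm.trans (mul_comm x (a : S))) (hPA _ heC x)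
    have hxb2 : x * (b : S) = 0 ∨ x * (b : S) = (b : S) := by
      by_cases h0 : x * (b : S) = 0
      · exact Or.inl h0
      right
      have hk : (c * x) * (x * (b : S)) = 0 := by
        have h1 : (c * x) * (x * (b : S)) = ((c * (b : S)) * x) * x := by ac_rfl
        rw [h1, hCB c hc, hz, hz]
      rcases hCkill _ heC _ h0 hk with h1 | h1 | h1
      · exfalso
        have h2 : (x * (b : S)) * (b : S) = x * ((b : S) * (b : S)) := by ac_rfl
        rw [hBB, h1, hAB] at h2
        exact hA0 h2.symm
      · exact h1
      · exact absurd (h1.symm.trans (mul_comm x (b : S))) (hPB _ heC x)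
    have hwkill : ∀ w : S, w ≠ 0 → x * w = 0 → w = (a : S) ∨ w = (b : S) := by
      intro w hw hxw
      have h1 : (c * x) * w = 0 := by
        have h2 : (c * x) * w = (x * w) * c := by ac_rfl
        rw [h2, hxw, hz]
      rcases hCkill _ heC w hw h1 with h2 | h2 | h2
      · exact Or.inl h2
      · exact Or.inr h2
      · exfalso
        rw [h2] at hxw
        rcases hCkill _ heC x hx0 (by rw [mul_comm]; exact hxw) with h4 | h4 | h4
        · exact hxA h4
        · exact hxB h4
        · exact hex h4.symm
    rcases hxa2 with ha0 | haA
    · rcases hxb2 with hb0 | hbB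
      · exfalso
        refine hxC ((cSet_mem_iff a b x).2 ⟨hx0, hxA, hxB, ha0, hb0, ?_⟩)
        intro w hw hxw
        rcases hwkill w hw hxw with h | h
        · exact Or.inl h
        · exact Or.inr (Or.inl h)
      · exfalso
        obtain ⟨w, hw0, hwA, hwx, hxw⟩ := hInt x hx0 hxA ha0
        rcases hwkill w hw0 hxw with h | h
        · exact hwA h
        · rw [h, hbB] at hxw; exact hB0 hxw
    · rcases hxb2 with hb0 | hbB
      · left
        apply hDuniq x hx0 hb0 hxB
        intro w hw hxw
        rcases hwkill w hw hxw with h | h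
        · exfalso; rw [h, haA] at hxw; exact hA0 hxw
        · exact Or.inl h
      · right
        intro w hw hxw
        rcases hwkill w hw hxw with h | h
        · rw [h, haA] at hxw; exact hA0 hxw
        · rw [h, hbB] at hxw; exact hB0 hxw
  -- products of two elements outside C stay outside C
  have hii : ∀ x y : S, x ∉ cSet S a b → y ∉ cSet S a b → x * y ∉ cSet S a b := by
    intro x y hxC hyC heC
    have hx0 : x ≠ 0 := fun h => h0C (by rwa [h, hz] at heC)
    have hy0 : y ≠ 0 := fun h => h0C (by rwa [h, mul0] at heC)
    have hex : x * y ≠ x := fun h => hxC (h ▸ heC)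
    have hey : x * y ≠ y := fun h => hyC (h ▸ heC)
    have hxA : x ≠ (a : S) := fun h => hPA _ heC y (by rw [h])
    have hxB : x ≠ (b : S) := fun h => hPB _ heC y (by rw [h])
    have hyA : y ≠ (a : S) := fun h => hPA _ heC x (by rw [h, mul_comm])
    have hyB : y ≠ (b : S) := fun h => hPB _ heC x (by rw [h, mul_comm])
    have hxa2 : x * (a : S) = 0 ∨ x * (a : S) = (a : S) := by
      by_cases h0 : x * (a : S) = 0
      · exact Or.inl h0
      right
      have hk : (x * y) * (x * (a : S)) = 0 := by
        have h1 : (x * y) * (x * (a : S)) = (((x * y) * (a : S)) * x) := by ac_rfl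
        rw [h1, hCA _ heC, hz]
      rcases hCkill _ heC _ h0 hk with h1 | h1 | h1
      · exact h1
      · exfalso
        have h2 : (x * (a : S)) * (b : S) = 0 := by
          have h3 : (x * (a : S)) * (b : S) = ((a : S) * (b : S)) * x := by ac_rfl
          rw [h3, hAB, hz]
        rw [h1] at h2; exact hb2 h2
      · exact absurd (h1.symm.trans (mul_comm x (a : S))) (hPA _ heC x)
    have hxb2 : x * (b : S) = 0 ∨ x * (b : S) = (b : S) := by
      by_cases h0 : x * (b : S) = 0
      · exact Or.inl h0
      right
      have hk : (x * y) * (x * (b : S)) = 0 := by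
        have h1 : (x * y) * (x * (b : S)) = (((x * y) * (b : S)) * x) := by ac_rfl
        rw [h1, hCB _ heC, hz]
      rcases hCkill _ heC _ h0 hk with h1 | h1 | h1
      · exfalso
        have h2 : (x * (b : S)) * (b : S) = x * ((b : S) * (b : S)) := by ac_rfl
        rw [hBB, h1, hAB] at h2
        exact hA0 h2.symm
      · exact h1
      · exact absurd (h1.symm.trans (mul_comm x (b : S))) (hPB _ heC x)
    have hyb2 : y * (b : S) = 0 ∨ y * (b : S) = (b : S) := by
      by_cases h0 : y * (b : S) = 0
      · exact Or.inl h0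
      right
      have hk : (x * y) * (y * (b : S)) = 0 := by
        have h1 : (x * y) * (y * (b : S)) = (((x * y) * (b : S)) * y) := by ac_rfl
        rw [h1, hCB _ heC, hz]
      rcases hCkill _ heC _ h0 hk with h1 | h1 | h1
      · exfalso
        have h2 : (y * (b : S)) * (b : S) = y * ((b : S) * (b : S)) := by ac_rfl
        rw [hBB, h1, hAB] at h2
        exact hA0 h2.symm
      · exact h1
      · exact absurd (h1.symm.trans (mul_comm y (b : S))) (hPB _ heC y)
    have hwkx : ∀ w : S, w ≠ 0 → x * w = 0 → w = (a : S) ∨ w = (b : S) := by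
      intro w hw hxw
      have h1 : (x * y) * w = 0 := by
        have h2 : (x * y) * w = (x * w) * y := by ac_rfl
        rw [h2, hxw, hz]
      rcases hCkill _ heC w hw h1 with h2 | h2 | h2
      · exact Or.inl h2
      · exact Or.inr h2
      · exfalso
        rw [h2] at hxw
        rcases hCkill _ heC x hx0 (by rw [mul_comm]; exact hxw) with h4 | h4 | h4
        · exact hxA h4
        · exact hxB h4
        · exact hex h4.symm
    have hwky : ∀ w : S, w ≠ 0 → y * w = 0 → w = (a : S) ∨ w = (b : S) := by
      intro w hw hyw
      have h1 : (x * y) * w = 0 := by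
        have h2 : (x * y) * w = (y * w) * x := by ac_rfl
        rw [h2, hyw, hz]
      rcases hCkill _ heC w hw h1 with h2 | h2 | h2
      · exact Or.inl h2
      · exact Or.inr h2
      · exfalso
        rw [h2] at hyw
        rcases hCkill _ heC y hy0 (by rw [mul_comm]; exact hyw) with h4 | h4 | h4
        · exact hyA h4
        · exact hyB h4
        · exact hey h4.symm
    rcases hxa2 with hxa0 | hxaA
    · rcases hxb2 with hxb0 | hxbB
      · refine hxC ((cSet_mem_iff a b x).2 ⟨hx0, hxA, hxB, hxa0, hxb0, ?_⟩)
        intro w hw hxw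
        rcases hwkx w hw hxw with h | h
        · exact Or.inl h
        · exact Or.inr (Or.inl h)
      · obtain ⟨w, hw0, hwA, hwx, hxw⟩ := hInt x hx0 hxA hxa0
        rcases hwkx w hw0 hxw with h | h
        · exact hwA h
        · rw [h, hxbB] at hxw; exact hB0 hxw
    · have hya0 : y * (a : S) = 0 := by
        have h1 : y * (x * (a : S)) = (x * y) * (a : S) := by ac_rfl
        rw [hxaA, hCA _ heC] at h1
        exact h1
      rcases hyb2 with hyb0 | hybB
      · refine hyC ((cSet_mem_iff a b y).2 ⟨hy0, hyA, hyB, hya0, hyb0, ?_⟩)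
        intro w hw hyw
        rcases hwky w hw hyw with h | h
        · exact Or.inl h
        · exact Or.inr (Or.inl h)
      · obtain ⟨w, hw0, hwA, hwy, hyw⟩ := hInt y hy0 hyA hya0
        rcases hwky w hw0 hyw with h | h
        · exact hwA h
        · rw [h, hybB] at hyw; exact hB0 hyw
  -- c * D is never a
  have hfA : ∀ c ∈ cSet S a b, c * Delt ≠ (a : S) := by
    intro c hc h
    have hvc0 : c * (v : S) ≠ 0 := hVC c hc
    have h1 : (c * (v : S)) * Delt = 0 := by
      have h2 : (c * (v : S)) * Delt = (v : S) * (c * Delt) := by ac_rfl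
      rw [h2, h, hVA]
    have h3 : (c * (v : S)) * (z : S) = 0 := by
      have h4 : (c * (v : S)) * (z : S) = ((v : S) * (z : S)) * c := by ac_rfl
      rw [h4, hVZ, hz]
    rcases hDkill _ hvc0 (by rw [mul_comm]; exact h1) with h2 | h2
    · rw [h2, hBZ] at h3; exact hB0 h3
    · rw [h2] at h3
      rcases hDkill _ hZ0 h3 with h4 | h4
      · exact hZneB h4
      · exact hZB (by rw [h4]; exact hDB)
  -- Lemma E : if c*D escapes C then no non-zero-divisor moves c inside C
  have hE : ∀ c ∈ cSet S a b, c * Delt ∉ cSet S a b →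
      ∀ x : S, (∀ w : S, w ≠ 0 → x * w ≠ 0) → c * x ∈ cSet S a b → c * x = c := by
    intro c hc hfC x hx heC
    by_contra hec
    have heD : (c * x) * Delt = c * Delt := by
      have h1 : (c * x) * Delt = c * (x * Delt) := by ac_rfl
      rw [h1, hxD x hx]
    have hf0 : c * Delt ≠ 0 := by
      intro h0
      rcases hCkill c hc Delt hD0 h0 with h1 | h1 | h1
      · exact hDneA h1
      · exact hDneB h1
      · have h2 := hCA c hc
        rw [← h1, hDA] at h2
        exact hA0 h2
    have hfB : (c * Delt) * (b : S) = 0 := by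
      have h1 : (c * Delt) * (b : S) = (Delt * (b : S)) * c := by ac_rfl
      rw [h1, hDB, hz]
    have hfneB : c * Delt ≠ (b : S) := by
      intro h; rw [h] at hfB; exact hb2 hfB
    have hfA0 : (c * Delt) * (a : S) = 0 := by
      have h1 : (c * Delt) * (a : S) = (c * (a : S)) * Delt := by ac_rfl
      rw [h1, hCA c hc, hz]
    have hfail : ¬ (∀ w : S, w ≠ 0 → (c * Delt) * w = 0 →
        w = (a : S) ∨ w = (b : S) ∨ w = c * Delt) := by
      intro hk
      exact hfC ((cSet_mem_iff a b _).2 ⟨hf0, hfA c hc, hfneB, hfA0, hfB, hk⟩)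
    push_neg at hfail
    obtain ⟨u, hu0, huf, huA, huB, huF⟩ := hfail
    have huD : u * Delt = (a : S) := by
      have h1 : c * (u * Delt) = 0 := by
        have h2 : c * (u * Delt) = (c * Delt) * u := by ac_rfl
        rw [h2, huf]
      by_cases h0 : u * Delt = 0
      · exfalso
        rcases hDkill u hu0 (by rw [mul_comm]; exact h0) with h2 | h2
        · exact huB h2
        · rw [h2] at huf
          have h3 : (c * Delt) * Delt = c * Delt := by
            have h4 : (c * Delt) * Delt = c * (Delt * Delt) := by ac_rfl
            rw [h4, hDD]
          rw [h3] at huf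
          exact hf0 huf
      rcases hCkill c hc _ h0 h1 with h2 | h2 | h2
      · exact h2
      · exfalso
        have h3 : (u * Delt) * (b : S) = 0 := by
          have h4 : (u * Delt) * (b : S) = (Delt * (b : S)) * u := by ac_rfl
          rw [h4, hDB, hz]
        rw [h2] at h3; exact hb2 h3
      · exfalso
        have h3 : (u * Delt) * Delt = u * Delt := by
          have h4 : (u * Delt) * Delt = u * (Delt * Delt) := by ac_rfl
          rw [h4, hDD]
        rw [h2] at h3
        exact hfC (by rw [h3]; exact hc)
    have h1 : Delt * ((c * x) * u) = 0 := by
      have h2 : Delt * ((c * x) * u) = ((c * x) * Delt) * u := by ac_rfl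
      rw [h2, heD]; exact huf
    by_cases hcu0 : (c * x) * u = 0
    · rcases hCkill _ heC u hu0 hcu0 with h2 | h2 | h2
      · exact huA h2
      · exact huB h2
      · apply hfA c hc
        rw [← heD, ← h2]
        exact huD
    · rcases hDkill _ hcu0 h1 with h2 | h2
      · have h3 : (b : S) * ((c * x) * u) = 0 := by
          have h4 : (b : S) * ((c * x) * u) = ((c * x) * (b : S)) * u := by ac_rfl
          rw [h4, hCB _ heC, hz]
        rw [h2] at h3; exact hb2 h3
      · have h3 : ((c * x) * u) * Delt = 0 := by
          have h4 : ((c * x) * u) * Delt = ((c * x) * Delt) * u := by ac_rfl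
          rw [h4, heD]; exact huf
        rw [h2, hDD] at h3
        exact hD0 h3
  -- choose the right element of C
  obtain ⟨cs, hcsC, hP1, hP2, hP3⟩ : ∃ cs ∈ cSet S a b,
      (cs * cs ∉ cSet S a b ∨ cs * cs = cs) ∧
      (cs * Delt ∉ cSet S a b ∨ cs * Delt = cs) ∧
      (∀ x : S, (∀ w : S, w ≠ 0 → x * w ≠ 0) → cs * x ∈ cSet S a b → cs * x = cs) := by
    by_cases hfC : c₁ * Delt ∈ cSet S a b
    · -- f := c₁ * Delt is in C : it absorbs D and all non-zero-divisors
      have hfD : (c₁ * Delt) * Delt = c₁ * Delt := by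
        have h1 : (c₁ * Delt) * Delt = c₁ * (Delt * Delt) := by ac_rfl
        rw [h1, hDD]
      have hfx : ∀ x : S, (∀ w : S, w ≠ 0 → x * w ≠ 0) → (c₁ * Delt) * x = c₁ * Delt := by
        intro x hx
        have h1 : (c₁ * Delt) * x = c₁ * (x * Delt) := by ac_rfl
        rw [h1, hxD x hx]
      have hff : (c₁ * Delt) * (c₁ * Delt) = (c₁ * c₁) * Delt := by
        have h1 : (c₁ * Delt) * (c₁ * Delt) = ((c₁ * c₁) * Delt) * Delt := by ac_rfl
        have h2 : ((c₁ * c₁) * Delt) * Delt = (c₁ * c₁) * (Delt * Delt) := by ac_rfl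
        rw [h1, h2, hDD]
      rcases hc₁sq with hq | hq
      · -- c₁² ∉ C
        by_cases hgC : (c₁ * c₁) * Delt ∈ cSet S a b
        · -- g := c₁² * D lies in C ; then g² = 0 and g works
          have hq0 : c₁ * c₁ ≠ 0 := by
            intro h; rw [h, hz] at hgC; exact h0C hgC
          have hqA : (c₁ * c₁) * (a : S) = 0 := by
            have h1 : (c₁ * c₁) * (a : S) = (c₁ * (a : S)) * c₁ := by ac_rfl
            rw [h1, hCA _ hc₁C, hz]
          have hqB : (c₁ * c₁) * (b : S) = 0 := by
            have h1 : (c₁ * c₁) * (b : S) = (c₁ * (b : S)) * c₁ := by ac_rfl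
            rw [h1, hCB _ hc₁C, hz]
          have hqneA : c₁ * c₁ ≠ (a : S) := by
            intro h
            rw [h] at hgC
            have h2 : (a : S) * Delt = (a : S) := by rw [mul_comm]; exact hDA
            rw [h2] at hgC
            exact hCneA _ hgC rfl
          have hqneB : c₁ * c₁ ≠ (b : S) := by
            intro h
            have h3 : (b : S) * (c₁ * c₁) = 0 := by
              have h4 : (b : S) * (c₁ * c₁) = (c₁ * (b : S)) * c₁ := by ac_rfl
              rw [h4, hCB _ hc₁C, hz]
            rw [h] at h3
            exact hb2 h3
          have hfail : ¬ (∀ w : S, w ≠ 0 → (c₁ * c₁) * w = 0 →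
              w = (a : S) ∨ w = (b : S) ∨ w = c₁ * c₁) := by
            intro hk
            exact hq ((cSet_mem_iff a b _).2 ⟨hq0, hqneA, hqneB, hqA, hqB, hk⟩)
          push_neg at hfail
          obtain ⟨w, hw0, hwq, hwA, hwB, hwQ⟩ := hfail
          have hwg : ((c₁ * c₁) * Delt) * w = 0 := by
            have h1 : ((c₁ * c₁) * Delt) * w = ((c₁ * c₁) * w) * Delt := by ac_rfl
            rw [h1, hwq, hz]
          have hwEq : w = (c₁ * c₁) * Delt := by
            rcases hCkill _ hgC w hw0 hwg with h | h | h
            · exact absurd h hwA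
            · exact absurd h hwB
            · exact h
          have hgg : ((c₁ * c₁) * Delt) * ((c₁ * c₁) * Delt) = 0 := by
            rw [hwEq] at hwq
            have h1 : ((c₁ * c₁) * Delt) * ((c₁ * c₁) * Delt) =
                ((c₁ * c₁) * ((c₁ * c₁) * Delt)) * (Delt) := by ac_rfl
            rw [h1, hwq, hz]
          refine ⟨(c₁ * c₁) * Delt, hgC, Or.inl (by rw [hgg]; exact h0C), Or.inr ?_, ?_⟩
          · have h1 : ((c₁ * c₁) * Delt) * Delt = (c₁ * c₁) * (Delt * Delt) := by ac_rfl
            rw [h1, hDD]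
          · intro x hx _
            have h1 : ((c₁ * c₁) * Delt) * x = (c₁ * c₁) * (x * Delt) := by ac_rfl
            rw [h1, hxD x hx]
        · -- g ∉ C : then f itself works
          refine ⟨c₁ * Delt, hfC, Or.inl (by rw [hff]; exact hgC), Or.inr hfD,
            fun x hx _ => hfx x hx⟩
      · -- c₁² = c₁
        rw [Set.mem_singleton_iff] at hq
        refine ⟨c₁ * Delt, hfC, Or.inr (by rw [hff, hq]), Or.inr hfD,
          fun x hx _ => hfx x hx⟩
    · -- c₁ * D ∉ C : then c₁ itself works
      refine ⟨c₁, hc₁C, ?_, Or.inl hfC, fun x hx h => hE c₁ hc₁C hfC x hx h⟩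
      rcases hc₁sq with hq | hq
      · exact Or.inl hq
      · exact Or.inr (Set.mem_singleton_iff.1 hq)
  -- closure of (S \ C) ∪ {cs}
  have key : ∀ t : S, t ∉ cSet S a b → (cs * t ∉ cSet S a b ∨ cs * t = cs) := by
    intro t ht
    by_cases hec : cs * t ∈ cSet S a b
    · right
      by_cases h1 : cs * t = cs
      · exact h1
      · exfalso
        have h2 : cs * t ≠ t := fun h => ht (h ▸ hec)
        rcases hclass cs hcsC t ht hec h1 h2 with h3 | h3
        · rw [h3] at hec h1
          rcases hP2 with h4 | h4
          · exact h4 hec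
          · exact h1 h4
        · exact h1 (hP3 t h3 hec)
    · exact Or.inl hec
  refine ⟨cs, hcsC, ?_⟩
  intro x hx y hy
  rcases hx with hx | hx
  · rcases hy with hy | hy
    · exact Or.inl (hii x y hx hy)
    · rw [Set.mem_singleton_iff] at hy
      subst hy
      rcases key x hx with h | h
      · exact Or.inl (by rw [mul_comm]; exact h)
      · exact Or.inr (by rw [mul_comm]; exact h)
  · rw [Set.mem_singleton_iff] at hx
    subst hx
    rcases hy with hy | hy
    · rcases key y hy with h | h
      · exact Or.inl h
      · exact Or.inr h
    · rw [Set.mem_singleton_iff] at hy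
      subst hy
      rcases hP1 with h | h
      · exact Or.inl h
      · exact Or.inr h
end

section
/- Let S be a commutative semigroup with zero and G = Γ(S). Suppose there exist adjacent vertices a, b, a vertex s with N(s) = {a,b}, and a vertex z with d(s,z) = 3. Let L = {y : d(s,y) = 3}. Then no two vertices of L are adjacent in G, i.e., for all u, v ∈ L, uv ≠ 0. -/
/-!
If `u * v = 0` for two vertices at distance 3 from `s`, then `w = u * a` is nonzero (otherwise
`s - a - u` has length 2) and is annihilated by both `s` and `v`. As `N(s) = {a, b}`, this forces
`w ∈ {s, a, b}`, which puts `v` within distance 2 of `s`.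
-/

namespace SimpleGraph

variable {V : Type*} {G : SimpleGraph V} {u v w : V}

lemma dist_le_two_of_adj_of_adj (huv : G.Adj u v) (hvw : G.Adj v w) : G.dist u w ≤ 2 := by
  simpa using G.dist_le (huv.toWalk.append hvw.toWalk)

end SimpleGraph

namespace zdGraph

open SimpleGraph

variable {S : Type*} [CommSemigroup S] [Zero S] {s c v : {t : S // IsZeroDivisorElem t}}

lemma dist_le_one_of_mul_eq_zero (h : (s : S) * v = 0) : (zdGraph S).dist s v ≤ 1 := by
  by_cases hsv : s = v
  · simp [hsv]
  · exact (dist_eq_one_iff_adj.2 (show (zdGraph S).Adj s v from ⟨hsv, h⟩)).le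

lemma dist_le_two_of_adj_of_mul_eq_zero (hsc : (zdGraph S).Adj s c) (h : (c : S) * v = 0) :
    (zdGraph S).dist s v ≤ 2 := by
  by_cases hcv : c = v
  · subst hcv
    exact (dist_eq_one_iff_adj.2 hsc).trans_le one_le_two
  · exact dist_le_two_of_adj_of_adj hsc (show (zdGraph S).Adj c v from ⟨hcv, h⟩)

lemma eq_or_eq_or_eq_of_neighborSet_eq_pair {a b : {t : S // IsZeroDivisorElem t}}
    (hs : (zdGraph S).neighborSet s = {a, b}) {w : S} (hw : w ≠ 0) (hsw : (s : S) * w = 0) :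
    w = s ∨ w = a ∨ w = b := by
  have hwzd : IsZeroDivisorElem w := ⟨hw, s, s.2.1, by rw [mul_comm, hsw]⟩
  by_cases hws : w = s
  · exact Or.inl hws
  · have hadj : ⟨w, hwzd⟩ ∈ (zdGraph S).neighborSet s :=
      ⟨fun h => hws (congrArg Subtype.val h).symm, hsw⟩
    rw [hs] at hadj
    rcases hadj with h | h
    · exact Or.inr (Or.inl (congrArg Subtype.val h))
    · exact Or.inr (Or.inr (congrArg Subtype.val h))

end zdGraph

theorem stmt14_general {S : Type*} [CommSemigroup S] [Zero S] (hz : ∀ x : S, 0 * x = 0)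
    (a b s : {t : S // IsZeroDivisorElem t})
    (hs : (zdGraph S).neighborSet s = {a, b}) :
    ∀ u v : {t : S // IsZeroDivisorElem t},
      (zdGraph S).dist s u = 3 → (zdGraph S).dist s v = 3 →
      (u : S) * (v : S) ≠ 0 := by
  intro u v hu hv huv
  have hsa : (zdGraph S).Adj s a := by
    rw [← SimpleGraph.mem_neighborSet, hs]
    exact Or.inl rfl
  have hsb : (zdGraph S).Adj s b := by
    rw [← SimpleGraph.mem_neighborSet, hs]
    exact Or.inr rfl
  have hua : (u : S) * a ≠ 0 := fun h => by
    have := zdGraph.dist_le_two_of_adj_of_mul_eq_zero hsa (by rwa [mul_comm] at h)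
    omega
  have hsw : (s : S) * (u * a) = 0 := by rw [mul_left_comm, hsa.2, mul_comm, hz]
  have hwv : (u * a : S) * v = 0 := by rw [mul_right_comm, huv, hz]
  rcases zdGraph.eq_or_eq_or_eq_of_neighborSet_eq_pair hs hua hsw with h | h | h <;> rw [h] at hwv
  · have := zdGraph.dist_le_one_of_mul_eq_zero hwv
    omega
  · have := zdGraph.dist_le_two_of_adj_of_mul_eq_zero hsa hwv
    omega
  · have := zdGraph.dist_le_two_of_adj_of_mul_eq_zero hsb hwv
    omega

/-- Under condition (△), no two vertices of L = {y : d(s,y) = 3} are adjacent,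
i.e. their products are nonzero. -/
theorem stmt14 {S : Type*} [CommSemigroup S] [Zero S] (hz : ∀ x : S, 0 * x = 0)
    (a b s z : {t : S // IsZeroDivisorElem t})
    (hab : (zdGraph S).Adj a b)
    (hs : (zdGraph S).neighborSet s = {a, b})
    (hd : (zdGraph S).dist s z = 3) :
    ∀ u v : {t : S // IsZeroDivisorElem t},
      (zdGraph S).dist s u = 3 → (zdGraph S).dist s v = 3 →
      (u : S) * (v : S) ≠ 0 :=
  stmt14_general hz a b s hs
end

section
/- Let G be a graph that is the zero-divisor graph of a commutative semigroup with zero. Then for each pair x, y of distinct nonadjacent vertices of G there is a vertex z with N(x) ∪ N(y) ⊆ N(z) ∪ {z}. -/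
section ZeroDivisorGraph

variable {S : Type*} [CommSemigroup S] [Zero S]

theorem IsZeroDivisorElem.of_dvd (hz : ∀ a : S, 0 * a = 0) {u v : S}
    (hu : IsZeroDivisorElem u) (huv : u ∣ v) (hv : v ≠ 0) : IsZeroDivisorElem v := by
  obtain ⟨-, a, ha, hua⟩ := hu
  obtain ⟨c, rfl⟩ := huv
  refine ⟨hv, a, ha, ?_⟩
  rw [mul_right_comm, hua, hz]

theorem zdGraph_neighborSet_subset_insert_of_dvd (hz : ∀ a : S, 0 * a = 0)
    {u v : {t : S // IsZeroDivisorElem t}} (huv : (u : S) ∣ v) :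
    (zdGraph S).neighborSet u ⊆ insert v ((zdGraph S).neighborSet v) := by
  rintro a ⟨-, hua⟩
  obtain ⟨c, hv⟩ := huv
  by_cases hva : v = a
  · exact Or.inl hva.symm
  · refine Or.inr ⟨hva, ?_⟩
    change (v : S) * a = 0
    rw [hv, mul_right_comm, hua, hz]

end ZeroDivisorGraph

/-- In a zero-divisor graph, for every pair of distinct nonadjacent vertices x, y
there is a vertex z with N(x) ∪ N(y) ⊆ N(z) ∪ {z}. -/
theorem stmt15 {S : Type*} [CommSemigroup S] [Zero S] (hz : ∀ x : S, 0 * x = 0)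
    (x y : {t : S // IsZeroDivisorElem t}) (hxy : x ≠ y)
    (hnadj : ¬ (zdGraph S).Adj x y) :
    ∃ w : {t : S // IsZeroDivisorElem t},
      (zdGraph S).neighborSet x ∪ (zdGraph S).neighborSet y ⊆
        insert w ((zdGraph S).neighborSet w) := by
  have hxy0 : (x : S) * y ≠ 0 := fun h => hnadj ⟨hxy, h⟩
  let w : {t : S // IsZeroDivisorElem t} := ⟨x * y, x.2.of_dvd hz (dvd_mul_right _ _) hxy0⟩
  exact ⟨w, Set.union_subset
    (zdGraph_neighborSet_subset_insert_of_dvd hz (v := w) (dvd_mul_right _ _))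
    (zdGraph_neighborSet_subset_insert_of_dvd hz (v := w) (dvd_mul_left _ _))⟩
end

section
/- There is no commutative semigroup S with zero whose zero-divisor graph is the following graph G: vertices {a, b, d, c₁, x₁, w, u, v} with edges a–b, a–d, b–d, a–c₁, b–c₁ (so N(c₁)={a,b}), d–w (w an end vertex adjacent to d), a–u (u an end vertex adjacent to a), b–v (v an end vertex adjacent to b). That is, the graph of Fig.4 with |C(a,b)| = 1, |U| = |V| = |W| = 1 is not a semigroup graph. -/
/-- A commutative semigroup with zero element. -/
structure CommSemigroupWithZero : Type 1 where
  carrier : Type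
  [toCommSemigroup : CommSemigroup carrier]
  [toZero : Zero carrier]
  zero_mul' : ∀ x : carrier, 0 * x = 0

attribute [instance] CommSemigroupWithZero.toCommSemigroup CommSemigroupWithZero.toZero

/-- The graph of Fig.4 with |C(a,b)| = |U| = |V| = |W| = 1, on vertices
0=a, 1=b, 2=d, 3=c₁, 4=x₁, 5=w, 6=u, 7=v, with edges a–b, a–d, b–d, a–c₁, b–c₁,
d–w, a–u, b–v. -/
def fig4Graph : SimpleGraph (Fin 8) :=
  SimpleGraph.fromEdgeSet
    {s(0,1), s(0,2), s(1,2), s(0,3), s(1,3), s(2,5), s(0,6), s(1,7)}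

/-!
Write a, b, d, c, w, u, v for the vertices 0, 1, 2, 3, 5, 6, 7. A nonzero element that kills
some vertex is itself a vertex, and the vertices it kills confine it to their common closed
neighbourhood. Since `u * b` kills a, c, d, v, it equals b; likewise `v * a = a`. Then `w * u` kills
a and d but not b (as `w * u * b = w * b`), so `w * u = b`; likewise `w * v = a`. Finally
`w * c ≠ 0` kills a, b, u (as `w * u * c = b * c`) and v, but no vertex is equal or adjacent to all
four.
-/

instance (T : CommSemigroupWithZero) : SemigroupWithZero T.carrier where
  zero_mul := T.zero_mul'
  mul_zero x := by rw [mul_comm]; exact T.zero_mul' x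

namespace zdGraph

variable {V S : Type*} [CommSemigroup S] [Zero S] {G : SimpleGraph V}

theorem mul_eq_zero_of_adj (e : G ≃g zdGraph S) {i j : V} (h : G.Adj i j) :
    (e i : S) * e j = 0 :=
  (e.map_adj_iff.mpr h).2

theorem mul_ne_zero_of_not_adj (e : G ≃g zdGraph S) {i j : V} (hij : i ≠ j) (h : ¬ G.Adj i j) :
    (e i : S) * e j ≠ 0 :=
  fun h0 => h (e.map_adj_iff.mp ⟨e.injective.ne hij, h0⟩)

theorem exists_eq_of_annihilates (e : G ≃g zdGraph S) {z : S} (hz : z ≠ 0) {A B : Finset V}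
    (hA : A.Nonempty) (hzA : ∀ i ∈ A, z * e i = 0) (hzB : ∀ j ∈ B, z * e j ≠ 0) :
    ∃ k, (e k : S) = z ∧ (∀ i ∈ A, k = i ∨ G.Adj k i) ∧ ∀ j ∈ B, ¬ G.Adj k j := by
  obtain ⟨i₀, hi₀⟩ := hA
  obtain ⟨k, hk⟩ : ∃ k, (e k : S) = z :=
    ⟨e.symm ⟨z, hz, e i₀, (e i₀).2.1, hzA i₀ hi₀⟩, by simp⟩
  refine ⟨k, hk, fun i hi => or_iff_not_imp_left.mpr fun hki => ?_,
    fun j hj hadj => hzB j hj (hk ▸ mul_eq_zero_of_adj e hadj)⟩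
  by_contra hadj
  exact mul_ne_zero_of_not_adj e hki hadj (hk ▸ hzA i hi)

theorem eq_of_annihilates (e : G ≃g zdGraph S) {z : S} (hz : z ≠ 0) {A B : Finset V} {c : V}
    (hA : A.Nonempty) (hzA : ∀ i ∈ A, z * e i = 0) (hzB : ∀ j ∈ B, z * e j ≠ 0)
    (hc : ∀ k, (∀ i ∈ A, k = i ∨ G.Adj k i) → (∀ j ∈ B, ¬ G.Adj k j) → k = c) :
    z = e c := by
  obtain ⟨k, rfl, hkA, hkB⟩ := exists_eq_of_annihilates e hz hA hzA hzB
  rw [hc k hkA hkB]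

end zdGraph

theorem fig4Graph_adj_iff {i j : Fin 8} :
    fig4Graph.Adj i j ↔ i ≠ j ∧
      s(i, j) ∈ ({s(0,1), s(0,2), s(1,2), s(0,3), s(1,3), s(2,5), s(0,6), s(1,7)} :
        Finset (Sym2 (Fin 8))) := by
  simp [fig4Graph, and_comm]

instance : DecidableRel fig4Graph.Adj := fun _ _ => decidable_of_iff' _ fig4Graph_adj_iff

section fig4

open zdGraph

variable {T : CommSemigroupWithZero} (e : fig4Graph ≃g zdGraph T.carrier)

theorem fig4_u_mul_b : (e 6 : T.carrier) * e 1 = e 1 :=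
  eq_of_annihilates e (mul_ne_zero_of_not_adj e (by decide) (by decide)) (A := {0, 2, 3, 7})
    (B := ∅) (by decide)
    (fun i hi => by rw [mul_assoc, mul_eq_zero_of_adj e (by revert i; decide), mul_zero])
    (by simp) (by decide)

theorem fig4_v_mul_a : (e 7 : T.carrier) * e 0 = e 0 :=
  eq_of_annihilates e (mul_ne_zero_of_not_adj e (by decide) (by decide)) (A := {1, 2, 3, 6})
    (B := ∅) (by decide)
    (fun i hi => by rw [mul_assoc, mul_eq_zero_of_adj e (by revert i; decide), mul_zero])
    (by simp) (by decide)

theorem fig4_w_mul_u : (e 5 : T.carrier) * e 6 = e 1 := by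
  refine eq_of_annihilates e (mul_ne_zero_of_not_adj e (by decide) (by decide)) (A := {0, 2})
    (B := {1}) (by decide) ?_ ?_ (by decide)
  · simp only [Finset.forall_mem_insert, Finset.mem_singleton, forall_eq]
    exact ⟨by rw [mul_assoc, mul_eq_zero_of_adj e (by decide), mul_zero],
      by rw [mul_right_comm, mul_eq_zero_of_adj e (by decide), zero_mul]⟩
  · simpa only [Finset.mem_singleton, forall_eq, mul_assoc, fig4_u_mul_b e]
      using mul_ne_zero_of_not_adj e (i := 5) (j := 1) (by decide) (by decide)

theorem fig4_w_mul_v : (e 5 : T.carrier) * e 7 = e 0 := by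
  refine eq_of_annihilates e (mul_ne_zero_of_not_adj e (by decide) (by decide)) (A := {1, 2})
    (B := {0}) (by decide) ?_ ?_ (by decide)
  · simp only [Finset.forall_mem_insert, Finset.mem_singleton, forall_eq]
    exact ⟨by rw [mul_assoc, mul_eq_zero_of_adj e (by decide), mul_zero],
      by rw [mul_right_comm, mul_eq_zero_of_adj e (by decide), zero_mul]⟩
  · simpa only [Finset.mem_singleton, forall_eq, mul_assoc, fig4_v_mul_a e]
      using mul_ne_zero_of_not_adj e (i := 5) (j := 0) (by decide) (by decide)

end fig4

/-- The graph of Fig.4 with |C(a,b)| = |U| = |V| = |W| = 1 is not a semigroup graph. -/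
theorem fig4_not_semigroup_graph :
    ¬ ∃ T : CommSemigroupWithZero, Nonempty (fig4Graph ≃g zdGraph T.carrier) := by
  rintro ⟨T, ⟨e⟩⟩
  have hwc : ∀ i ∈ ({0, 1, 6, 7} : Finset (Fin 8)), (e 5 : T.carrier) * e 3 * e i = 0 := by
    simp only [Finset.forall_mem_insert, Finset.mem_singleton, forall_eq]
    refine ⟨?_, ?_, ?_, ?_⟩
    · rw [mul_assoc, zdGraph.mul_eq_zero_of_adj e (by decide), mul_zero]
    · rw [mul_assoc, zdGraph.mul_eq_zero_of_adj e (by decide), mul_zero]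
    · rw [mul_right_comm, fig4_w_mul_u, zdGraph.mul_eq_zero_of_adj e (by decide)]
    · rw [mul_right_comm, fig4_w_mul_v, zdGraph.mul_eq_zero_of_adj e (by decide)]
  obtain ⟨k, -, hk, -⟩ := zdGraph.exists_eq_of_annihilates e
    (zdGraph.mul_ne_zero_of_not_adj e (by decide) (by decide)) (by decide) hwc
    (B := ∅) (by simp)
  revert k
  decide
end
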